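/- arXiv:2001.05306 — 4 statements merged into one kernel-verified Lean document; each statement's English description precedes it below -/
import Mathlib

section
/- Any two maximal lines of an n-correct set X intersect at a node of X. -/
attribute [local instance] Classical.propDecidable

/-- Evaluate a bivariate polynomial at a point of the plane. -/
noncomputable def evalPt (p : MvPolynomial (Fin 2) ℝ) (A : ℝ × ℝ) : ℝ :=
  MvPolynomial.eval ![A.1, A.2] p

/-- A (polynomial defining a) line: a bivariate polynomial of total degree exactly 1. -/
def IsLinearPoly (l : MvPolynomial (Fin 2) ℝ) : Prop := l.totalDegree = 1

/-- A point lies on the line defined by `l`. -/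
def OnLine (l : MvPolynomial (Fin 2) ℝ) (A : ℝ × ℝ) : Prop := evalPt l A = 0

/-- Two degree-1 polynomials define the same line (same zero set). -/
def SameLine (l₁ l₂ : MvPolynomial (Fin 2) ℝ) : Prop := ∀ P, OnLine l₁ P ↔ OnLine l₂ P

/-- `X` is an `n`-correct set of nodes in the plane. -/
def NCorrect (n : ℕ) (X : Finset (ℝ × ℝ)) : Prop :=
  X.card = (n + 2) * (n + 1) / 2 ∧
  ∀ c : (ℝ × ℝ) → ℝ, ∃! p : MvPolynomial (Fin 2) ℝ,
    p.totalDegree ≤ n ∧ ∀ A ∈ X, evalPt p A = c A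

/-- `p` is the `n`-fundamental polynomial of node `A` in `X`. -/
def IsFundamental (n : ℕ) (X : Finset (ℝ × ℝ)) (A : ℝ × ℝ)
    (p : MvPolynomial (Fin 2) ℝ) : Prop :=
  p.totalDegree ≤ n ∧ evalPt p A = 1 ∧ ∀ B ∈ X, B ≠ A → evalPt p B = 0

/-- Node `A` of `X` uses line `l`. -/
def Uses (n : ℕ) (X : Finset (ℝ × ℝ)) (A : ℝ × ℝ) (l : MvPolynomial (Fin 2) ℝ) : Prop :=
  ∃ p, IsFundamental n X A p ∧ l ∣ p

/-- The set of nodes of `X` using the line `l` (the set `Xˡ`). -/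
noncomputable def UsedSet (n : ℕ) (X : Finset (ℝ × ℝ)) (l : MvPolynomial (Fin 2) ℝ) :
    Finset (ℝ × ℝ) := X.filter (fun A => Uses n X A l)

/-- `l` is a maximal line of `X`: a line passing through exactly `n+1` nodes. -/
def IsMaximalLine (n : ℕ) (X : Finset (ℝ × ℝ)) (l : MvPolynomial (Fin 2) ℝ) : Prop :=
  IsLinearPoly l ∧ (X.filter (fun A => OnLine l A)).card = n + 1

/-- `X` is a `GC_n` set. -/
def GCSet (n : ℕ) (X : Finset (ℝ × ℝ)) : Prop :=
  NCorrect n X ∧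
  ∀ A ∈ X, ∃ f : Fin n → MvPolynomial (Fin 2) ℝ,
    (∀ i, IsLinearPoly (f i)) ∧ IsFundamental n X A (∏ i, f i)

/-- `L` is a set of representatives (one per line) of all maximal lines of `X`. -/
def MaximalLinesRep (n : ℕ) (X : Finset (ℝ × ℝ))
    (L : Finset (MvPolynomial (Fin 2) ℝ)) : Prop :=
  (∀ l ∈ L, IsMaximalLine n X l) ∧
  (∀ l₁ ∈ L, ∀ l₂ ∈ L, SameLine l₁ l₂ → l₁ = l₂) ∧
  (∀ l, IsMaximalLine n X l → ∃ l' ∈ L, SameLine l l')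

/-- A maximal line `lam` is `l`-disjoint: it meets `l` at no node of `X`. -/
def IsDisjointMax (n : ℕ) (X : Finset (ℝ × ℝ)) (l lam : MvPolynomial (Fin 2) ℝ) : Prop :=
  IsMaximalLine n X lam ∧ ∀ A ∈ X, ¬(OnLine lam A ∧ OnLine l A)

/-- A maximal line `lam` is a member of a pair of `l`-adjoint maximal lines. -/
def IsAdjointMax (n : ℕ) (X : Finset (ℝ × ℝ)) (l lam : MvPolynomial (Fin 2) ℝ) : Prop :=
  IsMaximalLine n X lam ∧ ∃ lam', IsMaximalLine n X lam' ∧ ¬SameLine lam lam' ∧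
    ∃ A ∈ X, OnLine lam A ∧ OnLine lam' A ∧ OnLine l A

/-- The `l`-lowering `X̂(l)` of `X`. -/
noncomputable def Lowering (n : ℕ) (X : Finset (ℝ × ℝ)) (l : MvPolynomial (Fin 2) ℝ) :
    Finset (ℝ × ℝ) :=
  X.filter (fun A => ¬ ∃ lam, (IsDisjointMax n X l lam ∨ IsAdjointMax n X l lam) ∧ OnLine lam A)

/-- A node `A` is a `1_m`-node of `X` w.r.t. the maximal-line representatives `L`:
it lies on exactly one maximal line. -/
def Is1mNode (L : Finset (MvPolynomial (Fin 2) ℝ)) (A : ℝ × ℝ) : Prop :=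
  (L.filter (fun l => OnLine l A)).card = 1

/-- `k` lines in general position: no two parallel (any two meet in exactly one point),
no three concurrent. -/
def InGenPos (k : ℕ) (f : Fin k → MvPolynomial (Fin 2) ℝ) : Prop :=
  (∀ i, IsLinearPoly (f i)) ∧
  (∀ i j, i ≠ j → ∃! P : ℝ × ℝ, OnLine (f i) P ∧ OnLine (f j) P) ∧
  (∀ i j m, i ≠ j → j ≠ m → i ≠ m →
    ¬ ∃ P : ℝ × ℝ, OnLine (f i) P ∧ OnLine (f j) P ∧ OnLine (f m) P)

/-- `X` is a Chung-Yao lattice of degree `m`. -/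
def IsChungYao (m : ℕ) (X : Finset (ℝ × ℝ)) : Prop :=
  ∃ f : Fin (m + 2) → MvPolynomial (Fin 2) ℝ, InGenPos (m + 2) f ∧
    ∀ P : ℝ × ℝ, P ∈ X ↔ ∃ i j, i ≠ j ∧ OnLine (f i) P ∧ OnLine (f j) P

/-! Suppose `l₁` and `l₂` share no node, and let `p` be the fundamental polynomial of a node
`A ∈ l₁`. Being of degree `≤ n` and vanishing at the `n + 1` nodes of `l₂`, `p` vanishes on all
of `l₂`. On `l₁` it vanishes at the `n` nodes other than `A` and, in addition, either at the point
where `l₁` meets `l₂` (not a node), or, if the lines are parallel, "at infinity": the top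
coefficient of the restriction of `p` to a line depends only on the direction of the line, so it
is the same on `l₁` as on `l₂`, where it is `0`. Either way the restriction of `p` to `l₁`, a
polynomial of degree `≤ n`, has too many zeros, so `p (A) = 0`, contradicting `p (A) = 1`. -/

theorem Finsupp.prod_toMultiset_map {α M : Type*} [CommMonoid M] (s : α →₀ ℕ) (f : α → M) :
    (s.toMultiset.map f).prod = s.prod fun i k => f i ^ k := by
  rw [Finsupp.toMultiset_map, Finsupp.prod_toMultiset,
    Finsupp.prod_mapDomain_index (fun _ => pow_zero _) (fun _ _ _ => pow_add _ _ _)]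

namespace MvPolynomial

variable {σ R : Type*} [CommSemiring R]

noncomputable def restrictLine (P d : σ → R) : MvPolynomial σ R →ₐ[R] Polynomial R :=
  aeval fun i => Polynomial.C (d i) * Polynomial.X + Polynomial.C (P i)

theorem eval_restrictLine (P d : σ → R) (p : MvPolynomial σ R) (t : R) :
    (restrictLine P d p).eval t = eval (P + t • d) p := by
  rw [restrictLine, ← Polynomial.coe_aeval_eq_eval, ← AlgHom.comp_apply, comp_aeval,
    ← aeval_eq_eval]
  congr 2
  funext i
  simp only [map_add, map_mul, Polynomial.aeval_C, Polynomial.aeval_X, Pi.add_apply,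
    Pi.smul_apply, smul_eq_mul, Algebra.algebraMap_self, RingHom.id_apply]
  ring

theorem restrictLine_monomial (P d : σ → R) (s : σ →₀ ℕ) (a : R) :
    restrictLine P d (monomial s a) = Polynomial.C a *
      (s.toMultiset.map fun i => Polynomial.C (d i) * Polynomial.X + Polynomial.C (P i)).prod := by
  rw [restrictLine, aeval_monomial, Finsupp.prod_toMultiset_map]
  rfl

theorem natDegree_restrictLine_monomial_le (P d : σ → R) (s : σ →₀ ℕ) (a : R) :
    (restrictLine P d (monomial s a)).natDegree ≤ s.degree := by
  rw [restrictLine_monomial]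
  refine (Polynomial.natDegree_C_mul_le _ _).trans <|
    (Polynomial.natDegree_multiset_prod_le _).trans ?_
  refine (Multiset.sum_le_card_nsmul _ 1 ?_).trans ?_
  · simp only [Multiset.map_map, Multiset.mem_map]
    rintro _ ⟨i, -, rfl⟩
    exact Polynomial.natDegree_linear_le
  · simp [Finsupp.card_toMultiset, Finsupp.degree_apply, Finsupp.sum]

theorem coeff_restrictLine_monomial (P d : σ → R) (s : σ →₀ ℕ) (a : R) :
    (restrictLine P d (monomial s a)).coeff s.degree = eval d (monomial s a) := by
  have hcard : s.degree = Multiset.card s.toMultiset * 1 := by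
    simp [Finsupp.card_toMultiset, Finsupp.degree_apply, Finsupp.sum]
  rw [restrictLine_monomial, Polynomial.coeff_C_mul, hcard,
    ← Multiset.card_map fun i => Polynomial.C (d i) * Polynomial.X + Polynomial.C (P i),
    Polynomial.coeff_multiset_prod_of_natDegree_le]
  · simp [eval_monomial, Multiset.map_map, Finsupp.prod_toMultiset_map]
  · simp only [Multiset.mem_map]
    rintro _ ⟨i, -, rfl⟩
    exact Polynomial.natDegree_linear_le

theorem natDegree_restrictLine_le (P d : σ → R) (p : MvPolynomial σ R) :
    (restrictLine P d p).natDegree ≤ p.totalDegree := by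
  conv_lhs => rw [p.as_sum, map_sum]
  exact Polynomial.natDegree_sum_le_of_forall_le _ _ fun s hs =>
    (natDegree_restrictLine_monomial_le P d s _).trans (le_totalDegree hs)

theorem coeff_restrictLine_of_totalDegree_le (P d : σ → R) {p : MvPolynomial σ R} {n : ℕ}
    (hp : p.totalDegree ≤ n) :
    (restrictLine P d p).coeff n = eval d (homogeneousComponent n p) := by
  conv_lhs => rw [p.as_sum]
  conv_rhs => rw [p.as_sum]
  simp only [map_sum, Polynomial.finsetSum_coeff]
  refine Finset.sum_congr rfl fun s hs => ?_
  rw [homogeneousComponent_of_mem (isHomogeneous_monomial _ rfl)]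
  split_ifs with h
  · rw [h]
    exact coeff_restrictLine_monomial P d s _
  · rw [map_zero]
    exact Polynomial.coeff_eq_zero_of_natDegree_lt <|
      (natDegree_restrictLine_monomial_le P d s _).trans_lt
        (lt_of_le_of_ne ((le_totalDegree hs).trans hp) (Ne.symm h))

theorem eval_add_smul_of_totalDegree_le_one {l : MvPolynomial σ R} (hl : l.totalDegree ≤ 1)
    (P d : σ → R) (t : R) :
    eval (P + t • d) l = eval P l + t * eval d (homogeneousComponent 1 l) := by
  have hf := Polynomial.eq_X_add_C_of_natDegree_le_one ((natDegree_restrictLine_le P d l).trans hl)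
  rw [← eval_restrictLine, hf, coeff_restrictLine_of_totalDegree_le P d hl,
    Polynomial.coeff_zero_eq_eval_zero, eval_restrictLine, zero_smul, add_zero]
  simp only [Polynomial.eval_add, Polynomial.eval_mul, Polynomial.eval_C, Polynomial.eval_X]
  ring

end MvPolynomial

open MvPolynomial

theorem vec_fst_snd_add_smul (A d : ℝ × ℝ) (t : ℝ) :
    (![(A + t • d).1, (A + t • d).2] : Fin 2 → ℝ) = ![A.1, A.2] + t • ![d.1, d.2] := by
  ext i
  fin_cases i <;> simp

theorem evalPt_add_smul (p : MvPolynomial (Fin 2) ℝ) (A d : ℝ × ℝ) (t : ℝ) :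
    evalPt p (A + t • d) = (restrictLine ![A.1, A.2] ![d.1, d.2] p).eval t := by
  rw [eval_restrictLine, evalPt, vec_fst_snd_add_smul]

noncomputable def linearPart (l : MvPolynomial (Fin 2) ℝ) (v : ℝ × ℝ) : ℝ :=
  eval ![v.1, v.2] (homogeneousComponent 1 l)

theorem evalPt_add_smul_of_totalDegree_le_one {l : MvPolynomial (Fin 2) ℝ}
    (hl : l.totalDegree ≤ 1) (A d : ℝ × ℝ) (t : ℝ) :
    evalPt l (A + t • d) = evalPt l A + t * linearPart l d := by
  rw [evalPt, vec_fst_snd_add_smul, eval_add_smul_of_totalDegree_le_one hl, evalPt, linearPart]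

theorem linearPart_eq {l : MvPolynomial (Fin 2) ℝ} (hl : l.totalDegree ≤ 1) (v : ℝ × ℝ) :
    linearPart l v = v.1 * linearPart l (1, 0) + v.2 * linearPart l (0, 1) := by
  have h := evalPt_add_smul_of_totalDegree_le_one hl 0 v 1
  have h' := evalPt_add_smul_of_totalDegree_le_one hl (v.1, 0) (0, 1) v.2
  have h'' := evalPt_add_smul_of_totalDegree_le_one hl 0 (1, 0) v.1
  simp only [one_smul, zero_add, Prod.smul_mk, smul_eq_mul, mul_one, mul_zero, Prod.mk_add_mk,
    add_zero] at h h' h''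
  rw [Prod.mk.eta] at h'
  linarith

noncomputable def lineDir (l : MvPolynomial (Fin 2) ℝ) : ℝ × ℝ :=
  (linearPart l (0, 1), -linearPart l (1, 0))

theorem linearPart_lineDir {l : MvPolynomial (Fin 2) ℝ} (hl : l.totalDegree ≤ 1) :
    linearPart l (lineDir l) = 0 := by
  rw [linearPart_eq hl, lineDir]
  ring

theorem evalPt_add_smul_lineDir {l : MvPolynomial (Fin 2) ℝ} (hl : l.totalDegree ≤ 1)
    (A : ℝ × ℝ) (t : ℝ) : evalPt l (A + t • lineDir l) = evalPt l A := by
  rw [evalPt_add_smul_of_totalDegree_le_one hl, linearPart_lineDir hl, mul_zero, add_zero]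

theorem IsLinearPoly.lineDir_ne_zero {l : MvPolynomial (Fin 2) ℝ} (hl : IsLinearPoly l) :
    lineDir l ≠ 0 := by
  intro h
  have hL : ∀ v, linearPart l v = 0 := fun v => by
    rw [linearPart_eq hl.le]
    simp only [lineDir, Prod.mk_eq_zero, neg_eq_zero] at h
    rw [h.1, h.2, mul_zero, mul_zero, add_zero]
  have hC : l = C (evalPt l 0) := MvPolynomial.funext fun x => by
    have hx := evalPt_add_smul_of_totalDegree_le_one hl.le 0 (x 0, x 1) 1
    rw [hL, mul_zero, add_zero, zero_add, one_smul] at hx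
    have hvec : (![(x 0, x 1).1, (x 0, x 1).2] : Fin 2 → ℝ) = x := by
      ext i
      fin_cases i <;> rfl
    rw [eval_C, ← hx, evalPt, hvec]
  have hdeg : l.totalDegree = 0 := by rw [hC, totalDegree_C]
  exact zero_ne_one (hdeg.symm.trans hl)

theorem IsLinearPoly.exists_eq_add_smul_lineDir {l : MvPolynomial (Fin 2) ℝ}
    (hl : IsLinearPoly l) {A B : ℝ × ℝ} (hA : OnLine l A) (hB : OnLine l B) :
    ∃ t : ℝ, B = A + t • lineDir l := by
  have hdir := hl.lineDir_ne_zero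
  have hAB := evalPt_add_smul_of_totalDegree_le_one hl.le A (B - A) 1
  rw [one_smul, add_sub_cancel, show evalPt l A = 0 from hA, show evalPt l B = 0 from hB,
    linearPart_eq hl.le, Prod.fst_sub, Prod.snd_sub, zero_add, one_mul] at hAB
  simp only [lineDir, ne_eq, Prod.mk_eq_zero, neg_eq_zero] at hdir
  set b := linearPart l (1, 0)
  set c := linearPart l (0, 1)
  have hbc : b ^ 2 + c ^ 2 ≠ 0 := by
    intro h
    exact hdir ⟨by nlinarith [sq_nonneg b, sq_nonneg c], by nlinarith [sq_nonneg b, sq_nonneg c]⟩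
  refine ⟨(c * (B - A).1 - b * (B - A).2) / (b ^ 2 + c ^ 2), Prod.ext ?_ ?_⟩
  · simp only [lineDir, Prod.fst_add, Prod.smul_fst, smul_eq_mul, Prod.fst_sub, Prod.snd_sub]
    field_simp
    linear_combination (-b) * hAB
  · simp only [lineDir, Prod.snd_add, Prod.smul_snd, smul_eq_mul, Prod.fst_sub, Prod.snd_sub]
    field_simp
    linear_combination (-c) * hAB

theorem exists_onLine_onLine_of_linearPart_ne_zero {l₁ l₂ : MvPolynomial (Fin 2) ℝ}
    (hl₁ : l₁.totalDegree ≤ 1) (hl₂ : l₂.totalDegree ≤ 1) {A : ℝ × ℝ} (hA : OnLine l₁ A)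
    (h : linearPart l₂ (lineDir l₁) ≠ 0) : ∃ Q, OnLine l₁ Q ∧ OnLine l₂ Q := by
  refine ⟨A + (-evalPt l₂ A / linearPart l₂ (lineDir l₁)) • lineDir l₁, ?_, ?_⟩
  · rwa [OnLine, evalPt_add_smul_lineDir hl₁]
  · rw [OnLine, evalPt_add_smul_of_totalDegree_le_one hl₂]
    field_simp
    ring

theorem restrictLine_eq_zero_of_natDegree_lt_card {p : MvPolynomial (Fin 2) ℝ} {A d : ℝ × ℝ}
    {S : Finset (ℝ × ℝ)} (hS : ∀ B ∈ S, ∃ t : ℝ, B = A + t • d)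
    (hpS : ∀ B ∈ S, evalPt p B = 0)
    (hdeg : (restrictLine ![A.1, A.2] ![d.1, d.2] p).natDegree < S.card) :
    restrictLine ![A.1, A.2] ![d.1, d.2] p = 0 := by
  choose τ hτ using hS
  refine Polynomial.eq_zero_of_natDegree_lt_card_of_eval_eq_zero _ (f := fun B : S => τ B B.2)
    (fun B B' h => Subtype.ext ?_) (fun B => ?_) (by rwa [Fintype.card_coe])
  · rw [hτ B B.2, hτ B' B'.2]
    exact congrArg (fun t : ℝ => A + t • d) h
  · rw [← evalPt_add_smul, ← hτ B B.2]
    exact hpS B B.2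

theorem evalPt_eq_zero_of_restrictLine_eq_zero {p : MvPolynomial (Fin 2) ℝ} {A d : ℝ × ℝ}
    (h : restrictLine ![A.1, A.2] ![d.1, d.2] p = 0) : evalPt p A = 0 := by
  have hA := evalPt_add_smul p A d 0
  rwa [zero_smul, add_zero, h, Polynomial.eval_zero] at hA

theorem IsLinearPoly.evalPt_eq_zero_of_totalDegree_lt_card {l p : MvPolynomial (Fin 2) ℝ}
    (hl : IsLinearPoly l) {S : Finset (ℝ × ℝ)} (hS : ∀ B ∈ S, OnLine l B)
    (hpS : ∀ B ∈ S, evalPt p B = 0) (hdeg : p.totalDegree < S.card) {Q : ℝ × ℝ}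
    (hQ : OnLine l Q) : evalPt p Q = 0 :=
  evalPt_eq_zero_of_restrictLine_eq_zero <| restrictLine_eq_zero_of_natDegree_lt_card
    (fun B hB => hl.exists_eq_add_smul_lineDir hQ (hS B hB)) hpS
    ((natDegree_restrictLine_le _ _ p).trans_lt hdeg)

/-- Vanishing on a parallel line counts as one more zero (at infinity) on `l₁`. -/
theorem IsLinearPoly.evalPt_eq_zero_of_vanishes_on_parallel {l₁ l₂ p : MvPolynomial (Fin 2) ℝ}
    (hl₁ : IsLinearPoly l₁) (hl₂ : l₂.totalDegree ≤ 1) (hpar : linearPart l₂ (lineDir l₁) = 0)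
    {B : ℝ × ℝ} (hB : OnLine l₂ B) (hvan : ∀ Q, OnLine l₂ Q → evalPt p Q = 0)
    {S : Finset (ℝ × ℝ)} (hS : ∀ C ∈ S, OnLine l₁ C) (hpS : ∀ C ∈ S, evalPt p C = 0)
    (hdeg : p.totalDegree ≤ S.card) {A : ℝ × ℝ} (hA : OnLine l₁ A) : evalPt p A = 0 := by
  set d := lineDir l₁
  have hB₀ : restrictLine ![B.1, B.2] ![d.1, d.2] p = 0 := Polynomial.funext fun t => by
    rw [← evalPt_add_smul, Polynomial.eval_zero]
    refine hvan _ ?_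
    rwa [OnLine, evalPt_add_smul_of_totalDegree_le_one hl₂, hpar, mul_zero, add_zero]
  have htop : (restrictLine ![A.1, A.2] ![d.1, d.2] p).coeff S.card = 0 := by
    rw [coeff_restrictLine_of_totalDegree_le _ _ hdeg,
      ← coeff_restrictLine_of_totalDegree_le ![B.1, B.2] _ hdeg, hB₀, Polynomial.coeff_zero]
  refine evalPt_eq_zero_of_restrictLine_eq_zero (d := d) ?_
  by_contra hf
  have hlt : (restrictLine ![A.1, A.2] ![d.1, d.2] p).natDegree < S.card :=
    lt_of_le_of_ne ((natDegree_restrictLine_le _ _ p).trans hdeg) fun h =>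
      hf (Polynomial.leadingCoeff_eq_zero.mp (by rw [Polynomial.leadingCoeff, h, htop]))
  exact hf (restrictLine_eq_zero_of_natDegree_lt_card
    (fun C hC => hl₁.exists_eq_add_smul_lineDir hA (hS C hC)) hpS hlt)

theorem NCorrect.exists_isFundamental {n : ℕ} {X : Finset (ℝ × ℝ)} (hX : NCorrect n X)
    {A : ℝ × ℝ} (hA : A ∈ X) : ∃ p, IsFundamental n X A p := by
  obtain ⟨p, ⟨hdeg, hval⟩, -⟩ := hX.2 fun B => if B = A then 1 else 0
  exact ⟨p, hdeg, by simpa using hval A hA, fun B hB hBA => by simpa [hBA] using hval B hB⟩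

theorem IsMaximalLine.exists_node {n : ℕ} {X : Finset (ℝ × ℝ)} {l : MvPolynomial (Fin 2) ℝ}
    (h : IsMaximalLine n X l) : ∃ A ∈ X, OnLine l A := by
  obtain ⟨A, hA⟩ := Finset.card_pos.mp (h.2 ▸ n.succ_pos : 0 < (X.filter (OnLine l ·)).card)
  exact ⟨A, Finset.mem_filter.mp hA⟩

theorem maximal_lines_meet_at_node_general
    (n : ℕ) (X : Finset (ℝ × ℝ)) (hX : NCorrect n X)
    (l₁ l₂ : MvPolynomial (Fin 2) ℝ)
    (h₁ : IsMaximalLine n X l₁) (h₂ : IsMaximalLine n X l₂) :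
    ∃ A ∈ X, OnLine l₁ A ∧ OnLine l₂ A := by
  by_contra! hcon
  obtain ⟨A, hAX, hA⟩ := h₁.exists_node
  obtain ⟨B, -, hB⟩ := h₂.exists_node
  obtain ⟨p, hdeg, hpA, hp⟩ := hX.exists_isFundamental hAX
  have hvan₂ : ∀ Q, OnLine l₂ Q → evalPt p Q = 0 := fun Q =>
    h₂.1.evalPt_eq_zero_of_totalDegree_lt_card (S := X.filter (OnLine l₂ ·))
      (fun C hC => (Finset.mem_filter.mp hC).2)
      (fun C hC => hp C (Finset.mem_filter.mp hC).1 fun hCA =>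
        hcon A hAX hA (hCA ▸ (Finset.mem_filter.mp hC).2))
      (by rw [h₂.2]; omega)
  set S := (X.filter (OnLine l₁ ·)).erase A
  have hS : ∀ C ∈ S, OnLine l₁ C := fun C hC =>
    (Finset.mem_filter.mp (Finset.mem_of_mem_erase hC)).2
  have hpS : ∀ C ∈ S, evalPt p C = 0 := fun C hC =>
    hp C (Finset.mem_filter.mp (Finset.mem_of_mem_erase hC)).1 (Finset.ne_of_mem_erase hC)
  have hcard : S.card = n := by
    rw [Finset.card_erase_of_mem (Finset.mem_filter.mpr ⟨hAX, hA⟩), h₁.2, Nat.add_sub_cancel]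
  refine one_ne_zero (hpA.symm.trans ?_)
  by_cases hpar : linearPart l₂ (lineDir l₁) = 0
  · exact h₁.1.evalPt_eq_zero_of_vanishes_on_parallel h₂.1.le hpar hB hvan₂ hS hpS
      (hcard ▸ hdeg) hA
  · obtain ⟨Q, hQ₁, hQ₂⟩ := exists_onLine_onLine_of_linearPart_ne_zero h₁.1.le h₂.1.le hA hpar
    have hQS : Q ∉ S := fun hQ =>
      hcon Q (Finset.mem_filter.mp (Finset.mem_of_mem_erase hQ)).1 hQ₁ hQ₂
    refine h₁.1.evalPt_eq_zero_of_totalDegree_lt_card (S := insert Q S)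
      (Finset.forall_mem_insert _ _ _ |>.mpr ⟨hQ₁, hS⟩)
      (Finset.forall_mem_insert _ _ _ |>.mpr ⟨hvan₂ Q hQ₂, hpS⟩) ?_ hA
    rw [Finset.card_insert_of_notMem hQS, hcard]
    omega

/-- Any two (distinct) maximal lines of an `n`-correct set `X`
intersect at a node of `X`. -/
theorem maximal_lines_meet_at_node
    (n : ℕ) (X : Finset (ℝ × ℝ)) (hX : NCorrect n X)
    (l₁ l₂ : MvPolynomial (Fin 2) ℝ)
    (h₁ : IsMaximalLine n X l₁) (h₂ : IsMaximalLine n X l₂)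
    (hne : ¬ SameLine l₁ l₂) :
    ∃ A ∈ X, OnLine l₁ A ∧ OnLine l₂ A :=
  maximal_lines_meet_at_node_general n X hX l₁ l₂ h₁ h₂
end

section
/- If λ is a maximal line of a GC_n set X (n ≥ 1), then X \ λ is a GC_{n−1} set. -/
attribute [local instance] Classical.propDecidable

/-! Let `A` be a node off the maximal line `λ`. Its fundamental polynomial, a product of `n`
linear factors, vanishes at the `n + 1` nodes on `λ`, so by pigeonhole one factor vanishes at two
of them and therefore defines `λ`. That factor does not vanish on `X \ λ`, so the product of the
remaining `n - 1` factors, rescaled at `A`, is the fundamental polynomial of `A` in `X \ λ`.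
Lagrange interpolation with these polynomials gives existence of interpolants on `X \ λ`;
uniqueness follows from that on `X` after multiplying by the equation of `λ`. -/

open MvPolynomial

@[simp]
lemma evalPt_mul (p q : MvPolynomial (Fin 2) ℝ) (A : ℝ × ℝ) :
    evalPt (p * q) A = evalPt p A * evalPt q A :=
  map_mul _ p q

@[simp]
lemma evalPt_C (c : ℝ) (A : ℝ × ℝ) : evalPt (C c) A = c :=
  eval_C c

lemma two_le_of_ne_zero_of_ne_single {d : Fin 2 →₀ ℕ} (h : d ≠ 0)
    (h₀ : d ≠ Finsupp.single 0 1) (h₁ : d ≠ Finsupp.single 1 1) : 2 ≤ d 0 + d 1 := by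
  simp [Finsupp.ext_iff, Fin.forall_fin_two, Finsupp.single_apply] at h h₀ h₁
  omega

lemma eq_linear_of_totalDegree_le_one {l : MvPolynomial (Fin 2) ℝ} (hl : l.totalDegree ≤ 1) :
    l = C (l.coeff (Finsupp.single 0 1)) * X 0 + C (l.coeff (Finsupp.single 1 1)) * X 1
      + C (l.coeff 0) := by
  ext d
  by_cases hd : d = 0 ∨ d = Finsupp.single 0 1 ∨ d = Finsupp.single 1 1
  · rcases hd with rfl | rfl | rfl <;>
      simp [coeff_X, coeff_C, Finsupp.single_eq_single_iff, eq_comm (a := (0 : Fin 2 →₀ ℕ))]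
  push Not at hd
  obtain ⟨h, h₀, h₁⟩ := hd
  have hcoeff : l.coeff d = 0 := by
    by_contra hne
    have hdeg := le_totalDegree (mem_support_iff.mpr hne)
    rw [Finsupp.sum_fintype _ _ (fun _ => rfl), Fin.sum_univ_two] at hdeg
    have := two_le_of_ne_zero_of_ne_single h h₀ h₁
    omega
  simp [hcoeff, coeff_X, coeff_C, Ne.symm h, Ne.symm h₀, Ne.symm h₁]

lemma evalPt_of_totalDegree_le_one {l : MvPolynomial (Fin 2) ℝ} (hl : l.totalDegree ≤ 1)
    (P : ℝ × ℝ) :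
    evalPt l P = l.coeff (Finsupp.single 0 1) * P.1 + l.coeff (Finsupp.single 1 1) * P.2
      + l.coeff 0 := by
  conv_lhs => rw [eq_linear_of_totalDegree_le_one hl]
  simp [evalPt]

lemma IsLinearPoly.not_coeff_eq_zero {l : MvPolynomial (Fin 2) ℝ} (hl : IsLinearPoly l) :
    ¬ (l.coeff (Finsupp.single 0 1) = 0 ∧ l.coeff (Finsupp.single 1 1) = 0) := by
  rintro ⟨h₀, h₁⟩
  have hl' := eq_linear_of_totalDegree_le_one hl.le
  rw [h₀, h₁] at hl'
  have : l.totalDegree = 0 := by rw [hl']; simp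
  rw [IsLinearPoly] at hl
  omega

lemma eq_zero_of_mul_eq_zero_of_mul_eq_zero {a b x : ℝ} (hab : ¬ (a = 0 ∧ b = 0))
    (ha : a * x = 0) (hb : b * x = 0) : x = 0 := by
  by_contra hx
  exact hab ⟨(mul_eq_zero.mp ha).resolve_right hx, (mul_eq_zero.mp hb).resolve_right hx⟩

lemma onLine_of_onLine_of_ne {l m : MvPolynomial (Fin 2) ℝ} (hl : IsLinearPoly l)
    (hm : m.totalDegree ≤ 1) {P Q R : ℝ × ℝ} (hPQ : P ≠ Q) (hlP : OnLine l P) (hlQ : OnLine l Q)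
    (hmP : OnLine m P) (hmQ : OnLine m Q) (hlR : OnLine l R) : OnLine m R := by
  have hab := hl.not_coeff_eq_zero
  unfold OnLine at *
  rw [evalPt_of_totalDegree_le_one hl.le] at hlP hlQ hlR
  rw [evalPt_of_totalDegree_le_one hm] at hmP hmQ ⊢
  set a' := m.coeff (Finsupp.single 0 1)
  set b' := m.coeff (Finsupp.single 1 1)
  have hcross : (Q.1 - P.1) * (R.2 - P.2) - (Q.2 - P.2) * (R.1 - P.1) = 0 :=
    eq_zero_of_mul_eq_zero_of_mul_eq_zero hab
      (by linear_combination (R.2 - P.2) * (hlQ - hlP) - (Q.2 - P.2) * (hlR - hlP))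
      (by linear_combination (Q.1 - P.1) * (hlR - hlP) - (R.1 - P.1) * (hlQ - hlP))
  have hQP : ¬ (Q.1 - P.1 = 0 ∧ Q.2 - P.2 = 0) := fun h =>
    hPQ (Prod.ext (by linarith [h.1]) (by linarith [h.2]))
  exact eq_zero_of_mul_eq_zero_of_mul_eq_zero hQP
    (by linear_combination (R.1 - P.1) * (hmQ - hmP) + b' * hcross + (Q.1 - P.1) * hmP)
    (by linear_combination (R.2 - P.2) * (hmQ - hmP) - a' * hcross + (Q.2 - P.2) * hmP)

lemma sameLine_of_two_points {l m : MvPolynomial (Fin 2) ℝ} (hl : IsLinearPoly l)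
    (hm : IsLinearPoly m) {P Q : ℝ × ℝ} (hPQ : P ≠ Q) (hlP : OnLine l P) (hlQ : OnLine l Q)
    (hmP : OnLine m P) (hmQ : OnLine m Q) : SameLine l m := fun _ =>
  ⟨onLine_of_onLine_of_ne hl hm.le hPQ hlP hlQ hmP hmQ,
    onLine_of_onLine_of_ne hm hl.le hPQ hmP hmQ hlP hlQ⟩

lemma totalDegree_prod_le_card {ι : Type*} [Fintype ι] {g : ι → MvPolynomial (Fin 2) ℝ}
    (hg : ∀ i, IsLinearPoly (g i)) : (∏ i, g i).totalDegree ≤ Fintype.card ι := by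
  refine (totalDegree_finsetProd _ _).trans ?_
  exact (Finset.sum_le_sum fun i _ => (hg i).le).trans (by simp)

lemma IsLinearPoly.ne_zero {l : MvPolynomial (Fin 2) ℝ} (hl : IsLinearPoly l) : l ≠ 0 := by
  rintro rfl
  simp [IsLinearPoly] at hl

lemma IsLinearPoly.C_mul {l : MvPolynomial (Fin 2) ℝ} (hl : IsLinearPoly l) {c : ℝ}
    (hc : c ≠ 0) : IsLinearPoly (C c * l) := by
  rwa [IsLinearPoly, totalDegree_mul_of_isDomain (C_ne_zero.mpr hc) hl.ne_zero, totalDegree_C,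
    zero_add]

/-- Pigeonhole: the `n + 2` nodes on `lam` are zeros of the `n + 1` factors. -/
lemma IsFundamental.exists_sameLine {n : ℕ} {X : Finset (ℝ × ℝ)} {A : ℝ × ℝ}
    {f : Fin (n + 1) → MvPolynomial (Fin 2) ℝ} (hf : ∀ i, IsLinearPoly (f i))
    (hA : IsFundamental (n + 1) X A (∏ i, f i)) {lam : MvPolynomial (Fin 2) ℝ}
    (hlam : IsMaximalLine (n + 1) X lam) (hAlam : ¬ OnLine lam A) :
    ∃ i, SameLine (f i) lam := by
  let S := X.filter (fun B => OnLine lam B)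
  have hzero : ∀ B : S, ∃ i, OnLine (f i) B := by
    intro ⟨B, hB⟩
    obtain ⟨hBX, hBlam⟩ := Finset.mem_filter.mp hB
    have h0 := hA.2.2 B hBX (by rintro rfl; exact hAlam hBlam)
    rw [evalPt, map_prod] at h0
    obtain ⟨i, -, hi⟩ := Finset.prod_eq_zero_iff.mp h0
    exact ⟨i, hi⟩
  choose g hg using hzero
  obtain ⟨B, B', hBB', hgB⟩ := Fintype.exists_ne_map_eq_of_card_lt g (by simp [S, hlam.2])
  refine ⟨g B, sameLine_of_two_points (hf _) hlam.1 (Subtype.coe_ne_coe.mpr hBB') (hg B) ?_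
    (Finset.mem_filter.mp B.2).2 (Finset.mem_filter.mp B'.2).2⟩
  exact hgB ▸ hg B'

lemma IsFundamental.of_mul {n : ℕ} {X Y : Finset (ℝ × ℝ)} {A : ℝ × ℝ}
    {l q : MvPolynomial (Fin 2) ℝ} (h : IsFundamental (n + 1) X A (l * q))
    (hq : q.totalDegree ≤ n) (hYX : Y ⊆ X) (hl : ∀ B ∈ Y, ¬ OnLine l B) :
    IsFundamental n Y A (C (evalPt l A) * q) := by
  obtain ⟨-, hA, hB⟩ := h
  simp only [evalPt_mul] at hA hB
  refine ⟨(totalDegree_mul _ _).trans (by simpa using hq), by simpa using hA, fun B hBY hBA => ?_⟩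
  simp [(mul_eq_zero.mp (hB B (hYX hBY) hBA)).resolve_left (hl B hBY)]

lemma IsFundamental.exists_linear_factors {n : ℕ} {Y : Finset (ℝ × ℝ)} {A : ℝ × ℝ}
    {g : Fin n → MvPolynomial (Fin 2) ℝ} (hg : ∀ j, IsLinearPoly (g j)) {c : ℝ}
    (h : IsFundamental n Y A (C c * ∏ j, g j)) :
    ∃ g' : Fin n → MvPolynomial (Fin 2) ℝ,
      (∀ j, IsLinearPoly (g' j)) ∧ IsFundamental n Y A (∏ j, g' j) := by
  cases n with
  | zero =>
    have hc : c = 1 := by simpa [evalPt] using h.2.1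
    exact ⟨g, hg, by simpa [hc] using h⟩
  | succ n =>
    have hc : c ≠ 0 := by rintro rfl; simpa [evalPt] using h.2.1
    refine ⟨Fin.cons (C c * g 0) (Fin.tail g), Fin.cases ((hg 0).C_mul hc) (fun j => hg _), ?_⟩
    rw [Fin.prod_univ_succ] at h
    rwa [Fin.prod_cons, mul_assoc]

lemma exists_linear_factors_of_not_onLine_maximalLine {n : ℕ} {X : Finset (ℝ × ℝ)} {A : ℝ × ℝ}
    {f : Fin (n + 1) → MvPolynomial (Fin 2) ℝ} (hf : ∀ i, IsLinearPoly (f i))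
    (hA : IsFundamental (n + 1) X A (∏ i, f i)) {lam : MvPolynomial (Fin 2) ℝ}
    (hlam : IsMaximalLine (n + 1) X lam) (hAlam : ¬ OnLine lam A) :
    ∃ g : Fin n → MvPolynomial (Fin 2) ℝ, (∀ j, IsLinearPoly (g j)) ∧
      IsFundamental n (X.filter (fun A => ¬ OnLine lam A)) A (∏ j, g j) := by
  obtain ⟨i, hi⟩ := hA.exists_sameLine hf hlam hAlam
  rw [Fin.prod_univ_succAbove f i] at hA
  have hq := totalDegree_prod_le_card (fun j => hf (i.succAbove j))
  rw [Fintype.card_fin] at hq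
  have hi' : ∀ B ∈ X.filter (fun A => ¬ OnLine lam A), ¬ OnLine (f i) B := fun B hB hiB =>
    (Finset.mem_filter.mp hB).2 ((hi B).mp hiB)
  exact (hA.of_mul hq (Finset.filter_subset _ _) hi').exists_linear_factors fun j => hf _

lemma exists_interpolant_of_isFundamental {n : ℕ} {Y : Finset (ℝ × ℝ)}
    (h : ∀ A ∈ Y, ∃ p, IsFundamental n Y A p) (c : ℝ × ℝ → ℝ) :
    ∃ p : MvPolynomial (Fin 2) ℝ, p.totalDegree ≤ n ∧ ∀ B ∈ Y, evalPt p B = c B := by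
  choose p hp using h
  refine ⟨∑ A ∈ Y.attach, C (c A) * p A A.2, ?_, fun B hB => ?_⟩
  · refine (totalDegree_finsetSum _ _).trans (Finset.sup_le fun A _ => ?_)
    exact (totalDegree_mul _ _).trans (by simpa using (hp A A.2).1)
  · have heval : evalPt (∑ A ∈ Y.attach, C (c A) * p A A.2) B
        = ∑ A ∈ Y.attach, c A * evalPt (p A A.2) B := by simp [evalPt]
    rw [heval, Finset.sum_eq_single_of_mem ⟨B, hB⟩ (Finset.mem_attach _ _)]
    · rw [(hp B hB).2.1, mul_one]
    · intro A _ hAB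
      rw [(hp A A.2).2.2 B hB fun h => hAB (Subtype.ext h.symm), mul_zero]

lemma eq_of_evalPt_eq_of_not_onLine {n : ℕ} {X : Finset (ℝ × ℝ)} (hX : NCorrect (n + 1) X)
    {lam : MvPolynomial (Fin 2) ℝ} (hlam : IsLinearPoly lam) {p q : MvPolynomial (Fin 2) ℝ}
    (hp : p.totalDegree ≤ n) (hq : q.totalDegree ≤ n)
    (hpq : ∀ B ∈ X, ¬ OnLine lam B → evalPt p B = evalPt q B) : p = q := by
  have hdeg : ∀ r : MvPolynomial (Fin 2) ℝ, r.totalDegree ≤ n → (lam * r).totalDegree ≤ n + 1 :=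
    fun r hr => (totalDegree_mul _ _).trans (by rw [hlam]; omega)
  have huniq := hX.2 (evalPt (lam * p))
  refine mul_left_cancel₀ hlam.ne_zero (huniq.unique ⟨hdeg p hp, fun _ _ => rfl⟩ ⟨hdeg q hq, ?_⟩)
  intro B hB
  by_cases hB' : OnLine lam B
  · rw [evalPt_mul, evalPt_mul, show evalPt lam B = 0 from hB', zero_mul, zero_mul]
  · rw [evalPt_mul, evalPt_mul, hpq B hB hB']

lemma card_filter_not_onLine {n : ℕ} {X : Finset (ℝ × ℝ)}
    (hX : X.card = (n + 3) * (n + 2) / 2) {lam : MvPolynomial (Fin 2) ℝ}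
    (hlam : IsMaximalLine (n + 1) X lam) :
    (X.filter (fun A => ¬ OnLine lam A)).card = (n + 2) * (n + 1) / 2 := by
  have hsplit := Finset.card_filter_add_card_filter_not (s := X) (fun A => OnLine lam A)
  have htri : (n + 3) * (n + 2) / 2 = (n + 2) * (n + 1) / 2 + (n + 2) := Nat.triangle_succ (n + 2)
  rw [hlam.2] at hsplit
  omega

lemma nCorrect_filter_not_onLine {n : ℕ} {X : Finset (ℝ × ℝ)} (hX : NCorrect (n + 1) X)
    {lam : MvPolynomial (Fin 2) ℝ} (hlam : IsMaximalLine (n + 1) X lam)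
    (hfund : ∀ A ∈ X.filter (fun A => ¬ OnLine lam A),
      ∃ p, IsFundamental n (X.filter (fun A => ¬ OnLine lam A)) A p) :
    NCorrect n (X.filter (fun A => ¬ OnLine lam A)) := by
  refine ⟨card_filter_not_onLine hX.1 hlam, fun c => ?_⟩
  obtain ⟨p, hp, hpc⟩ := exists_interpolant_of_isFundamental hfund c
  refine ⟨p, ⟨hp, hpc⟩, fun q ⟨hq, hqc⟩ => eq_of_evalPt_eq_of_not_onLine hX hlam.1 hq hp ?_⟩
  intro B hB hB'
  rw [hqc B (Finset.mem_filter.mpr ⟨hB, hB'⟩), hpc B (Finset.mem_filter.mpr ⟨hB, hB'⟩)]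

/-- Removing a maximal line from a `GC_n` set yields a `GC_{n-1}` set. -/
theorem GC_minus_maximal
    (n : ℕ) (hn : 1 ≤ n) (X : Finset (ℝ × ℝ)) (hX : GCSet n X)
    (lam : MvPolynomial (Fin 2) ℝ) (hlam : IsMaximalLine n X lam) :
    GCSet (n - 1) (X.filter (fun A => ¬ OnLine lam A)) := by
  obtain ⟨m, rfl⟩ : ∃ m, n = m + 1 := ⟨n - 1, (Nat.succ_pred_eq_of_pos hn).symm⟩
  rw [Nat.add_sub_cancel]
  obtain ⟨hXc, hXf⟩ := hX
  have hfund : ∀ A ∈ X.filter (fun A => ¬ OnLine lam A),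
      ∃ g : Fin m → MvPolynomial (Fin 2) ℝ, (∀ j, IsLinearPoly (g j)) ∧
        IsFundamental m (X.filter (fun A => ¬ OnLine lam A)) A (∏ j, g j) := by
    intro A hA
    obtain ⟨hAX, hAlam⟩ := Finset.mem_filter.mp hA
    obtain ⟨f, hf, hAf⟩ := hXf A hAX
    exact exists_linear_factors_of_not_onLine_maximalLine hf hAf hlam hAlam
  refine ⟨nCorrect_filter_not_onLine hXc hlam fun A hA => ?_, hfund⟩
  obtain ⟨g, -, hg⟩ := hfund A hA
  exact ⟨_, hg⟩
end

section
/- If λ is a maximal line of a GC_n set X, then every maximal line of X different from λ is a maximal line of X \ λ. -/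
attribute [local instance] Classical.propDecidable

/-!
Two maximal lines `λ ≠ μ` of a `GC_n` set always meet at a node. Otherwise take a node `A ∈ μ`:
its fundamental polynomial is a product of `n` lines vanishing at the `n + 1` nodes of `λ`, so by
pigeonhole one factor passes through two of them and is `λ`. The other `n - 1` factors must then
vanish at the `n` nodes of `μ` other than `A`, so one of them is `μ`, which passes through `A`: a
contradiction. As two distinct lines share at most one point, removing `λ` takes exactly one node
off `μ`.
-/

namespace MvPolynomial

theorem eq_C_add_sum_C_mul_X_of_totalDegree_le_one {σ R : Type*} [Fintype σ] [CommSemiring R]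
    {p : MvPolynomial σ R} (hp : p.totalDegree ≤ 1) :
    p = C (p.coeff 0) + ∑ i, C (p.coeff (Finsupp.single i 1)) * X i := by
  classical
  ext d
  simp only [coeff_add, coeff_C, coeff_sum, coeff_C_mul, coeff_X, mul_ite, mul_one, mul_zero]
  by_cases hd : d ∈ p.support
  · have hdeg : d.degree ≤ 1 := (le_totalDegree hd).trans hp
    rcases Nat.le_one_iff_eq_zero_or_eq_one.mp hdeg with h0 | h1
    · obtain rfl := (Finsupp.degree_eq_zero_iff d).mp h0
      simp
    · obtain ⟨i, rfl⟩ : d ∈ Set.range (Finsupp.single · 1) := Finsupp.range_single_one ▸ h1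
      simp [Finsupp.single_eq_single_iff, eq_comm (a := (0 : σ →₀ ℕ))]
  · simp +contextual [notMem_support_iff.mp hd]

end MvPolynomial

open MvPolynomial

theorem IsLinearPoly.exists_evalPt_eq {l : MvPolynomial (Fin 2) ℝ} (hl : IsLinearPoly l) :
    ∃ a b c : ℝ, (a ≠ 0 ∨ b ≠ 0) ∧ ∀ P : ℝ × ℝ, evalPt l P = a * P.1 + b * P.2 + c := by
  have hl_eq := eq_C_add_sum_C_mul_X_of_totalDegree_le_one (le_of_eq hl)
  refine ⟨l.coeff (Finsupp.single 0 1), l.coeff (Finsupp.single 1 1), l.coeff 0, ?_, ?_⟩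
  · by_contra! h
    rw [Fin.sum_univ_two, h.1, h.2] at hl_eq
    have : l.totalDegree = 0 := by
      rw [hl_eq]
      simp
    exact absurd hl (by rw [IsLinearPoly, this]; exact zero_ne_one)
  · intro P
    rw [evalPt]
    conv_lhs => rw [hl_eq]
    simp only [Fin.sum_univ_two, map_add, map_mul, eval_C, eval_X, Matrix.cons_val_zero,
      Matrix.cons_val_one, Matrix.cons_val_fin_one]
    ring

theorem IsLinearPoly.onLine_of_two_common_points {f g : MvPolynomial (Fin 2) ℝ}
    (hf : IsLinearPoly f) (hg : IsLinearPoly g) {P Q : ℝ × ℝ} (hPQ : P ≠ Q)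
    (hfP : OnLine f P) (hfQ : OnLine f Q) (hgP : OnLine g P) (hgQ : OnLine g Q)
    {R : ℝ × ℝ} (hfR : OnLine f R) : OnLine g R := by
  obtain ⟨a, b, c, hab, hf⟩ := hf.exists_evalPt_eq
  obtain ⟨a', b', c', -, hg⟩ := hg.exists_evalPt_eq
  simp only [OnLine, hf, hg] at *
  set d₁ := Q.1 - P.1
  set d₂ := Q.2 - P.2
  set r₁ := R.1 - P.1
  set r₂ := R.2 - P.2
  -- `R - P` is parallel to `Q - P`, since both are orthogonal to `(a, b) ≠ 0`.
  have hcross : r₁ * d₂ - r₂ * d₁ = 0 := by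
    rcases hab with ha | hb
    · exact (mul_eq_zero.mp (by linear_combination d₂ * hfR - r₂ * hfQ + (r₂ - d₂) * hfP :
        a * (r₁ * d₂ - r₂ * d₁) = 0)).resolve_left ha
    · exact (mul_eq_zero.mp (by linear_combination r₁ * hfQ - d₁ * hfR + (d₁ - r₁) * hfP :
        b * (r₁ * d₂ - r₂ * d₁) = 0)).resolve_left hb
  have hd : d₁ ≠ 0 ∨ d₂ ≠ 0 := by
    by_contra! h
    exact hPQ (Prod.ext (by linarith [h.1]) (by linarith [h.2]))
  rcases hd with hd₁ | hd₂
  · refine (mul_eq_zero.mp (?_ : d₁ * (a' * R.1 + b' * R.2 + c') = 0)).resolve_left hd₁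
    linear_combination r₁ * hgQ + (d₁ - r₁) * hgP - b' * hcross
  · refine (mul_eq_zero.mp (?_ : d₂ * (a' * R.1 + b' * R.2 + c') = 0)).resolve_left hd₂
    linear_combination r₂ * hgQ + (d₂ - r₂) * hgP + a' * hcross

theorem IsLinearPoly.sameLine_of_two_common_points {f g : MvPolynomial (Fin 2) ℝ}
    (hf : IsLinearPoly f) (hg : IsLinearPoly g) {P Q : ℝ × ℝ} (hPQ : P ≠ Q)
    (hfP : OnLine f P) (hfQ : OnLine f Q) (hgP : OnLine g P) (hgQ : OnLine g Q) :
    SameLine f g := fun _ =>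
  ⟨hf.onLine_of_two_common_points hg hPQ hfP hfQ hgP hgQ,
    hg.onLine_of_two_common_points hf hPQ hgP hgQ hfP hfQ⟩

theorem eq_of_not_sameLine {l m : MvPolynomial (Fin 2) ℝ} (hl : IsLinearPoly l)
    (hm : IsLinearPoly m) (hlm : ¬ SameLine l m) {P Q : ℝ × ℝ} (hlP : OnLine l P)
    (hmP : OnLine m P) (hlQ : OnLine l Q) (hmQ : OnLine m Q) : P = Q := by
  by_contra hPQ
  exact hlm (hl.sameLine_of_two_common_points hm hPQ hlP hlQ hmP hmQ)

theorem exists_sameLine_of_card_lt {ι : Type*} {s : Finset ι} {f : ι → MvPolynomial (Fin 2) ℝ}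
    (hf : ∀ i ∈ s, IsLinearPoly (f i)) {l : MvPolynomial (Fin 2) ℝ} (hl : IsLinearPoly l)
    {S : Finset (ℝ × ℝ)} (hS : ∀ P ∈ S, OnLine l P) (hcard : s.card < S.card)
    (hcover : ∀ P ∈ S, ∃ i ∈ s, OnLine (f i) P) : ∃ i ∈ s, SameLine (f i) l := by
  have : Nonempty ι := by
    obtain ⟨P, hP⟩ := Finset.card_pos.mp (by omega : 0 < S.card)
    obtain ⟨i, -⟩ := hcover P hP
    exact ⟨i⟩
  choose! g hgs hg using hcover
  obtain ⟨P, hP, Q, hQ, hPQ, hgPQ⟩ := Finset.exists_ne_map_eq_of_card_lt_of_maps_to hcard hgs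
  refine ⟨g P, hgs P hP, (hf _ (hgs P hP)).sameLine_of_two_common_points hl hPQ (hg P hP) ?_
    (hS P hP) (hS Q hQ)⟩
  exact hgPQ ▸ hg Q hQ

theorem evalPt_prod_eq_zero_iff {ι : Type*} {s : Finset ι} {f : ι → MvPolynomial (Fin 2) ℝ}
    {P : ℝ × ℝ} : evalPt (∏ i ∈ s, f i) P = 0 ↔ ∃ i ∈ s, OnLine (f i) P := by
  rw [evalPt, map_prod]
  exact Finset.prod_eq_zero_iff

theorem GCSet.exists_mem_onLine_onLine {n : ℕ} {X : Finset (ℝ × ℝ)} (hX : GCSet n X)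
    {l m : MvPolynomial (Fin 2) ℝ} (hl : IsMaximalLine n X l) (hm : IsMaximalLine n X m) :
    ∃ B ∈ X, OnLine l B ∧ OnLine m B := by
  obtain ⟨A, hA⟩ := Finset.card_pos.mp (by rw [hm.2]; omega : 0 < (X.filter (OnLine m ·)).card)
  obtain ⟨hAX, hAm⟩ := Finset.mem_filter.mp hA
  by_contra! hlm
  obtain ⟨f, hf, -, hfA, hfX⟩ := hX.2 A hAX
  have hcover : ∀ B ∈ X, B ≠ A → ∃ i ∈ Finset.univ, OnLine (f i) B := fun B hB hBA =>
    evalPt_prod_eq_zero_iff.mp (hfX B hB hBA)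
  obtain ⟨j, -, hjl⟩ := exists_sameLine_of_card_lt (s := Finset.univ) (fun i _ => hf i) hl.1
    (S := X.filter (OnLine l ·)) (fun P hP => (Finset.mem_filter.mp hP).2) (by simp [hl.2])
    (by
      intro P hP
      obtain ⟨hPX, hPl⟩ := Finset.mem_filter.mp hP
      exact hcover P hPX (by rintro rfl; exact hlm P hPX hPl hAm))
  obtain ⟨i, -, him⟩ := exists_sameLine_of_card_lt (s := Finset.univ.erase j)
    (fun i _ => hf i) hm.1 (S := (X.filter (OnLine m ·)).erase A)
    (fun P hP => (Finset.mem_filter.mp (Finset.mem_of_mem_erase hP)).2)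
    (by
      rw [Finset.card_erase_of_mem (Finset.mem_univ j), Finset.card_erase_of_mem hA, hm.2]
      simpa using j.pos)
    (by
      intro P hP
      obtain ⟨hPA, hP⟩ := Finset.mem_erase.mp hP
      obtain ⟨hPX, hPm⟩ := Finset.mem_filter.mp hP
      obtain ⟨i, -, hi⟩ := hcover P hPX hPA
      refine ⟨i, Finset.mem_erase.mpr ⟨?_, Finset.mem_univ i⟩, hi⟩
      rintro rfl
      exact hlm P hPX ((hjl P).mp hi) hPm)
  have hfA0 : evalPt (∏ i, f i) A = 0 :=
    evalPt_prod_eq_zero_iff.mpr ⟨i, Finset.mem_univ i, (him A).mpr hAm⟩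
  exact one_ne_zero (hfA.symm.trans hfA0)

theorem card_filter_not_onLine_add_one {X : Finset (ℝ × ℝ)} {l m : MvPolynomial (Fin 2) ℝ}
    (hl : IsLinearPoly l) (hm : IsLinearPoly m) (hlm : ¬ SameLine l m) {B : ℝ × ℝ} (hB : B ∈ X)
    (hBl : OnLine l B) (hBm : OnLine m B) :
    ((X.filter (¬ OnLine l ·)).filter (OnLine m ·)).card + 1 = (X.filter (OnLine m ·)).card := by
  have hcommon : (X.filter (OnLine m ·)).filter (OnLine l ·) = {B} := by
    ext P
    simp only [Finset.mem_filter, Finset.mem_singleton]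
    constructor
    · rintro ⟨⟨-, hPm⟩, hPl⟩
      exact eq_of_not_sameLine hl hm hlm hPl hPm hBl hBm
    · rintro rfl
      exact ⟨⟨hB, hBm⟩, hBl⟩
  rw [Finset.filter_comm,
    ← Finset.card_filter_add_card_filter_not (s := X.filter (OnLine m ·)) (OnLine l ·),
    hcommon, Finset.card_singleton, add_comm]

/-- Any maximal line of a `GC_n` set `X` different from a maximal line
`lam` is a maximal line of `X \ lam` (a `GC_{n-1}` set). -/
theorem maximal_line_stays_maximal
    (n : ℕ) (hn : 1 ≤ n) (X : Finset (ℝ × ℝ)) (hX : GCSet n X)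
    (lam mu : MvPolynomial (Fin 2) ℝ)
    (hlam : IsMaximalLine n X lam) (hmu : IsMaximalLine n X mu)
    (hne : ¬ SameLine lam mu) :
    IsMaximalLine (n - 1) (X.filter (fun A => ¬ OnLine lam A)) mu := by
  obtain ⟨B, hB, hBlam, hBmu⟩ := hX.exists_mem_onLine_onLine hlam hmu
  have hcard := card_filter_not_onLine_add_one hlam.1 hmu.1 hne hB hBlam hBmu
  rw [hmu.2] at hcard
  exact ⟨hmu.1, by omega⟩
end

section
/- If ℓ is a maximal line of an n-correct set X, then the set of nodes using ℓ is exactly X \ ℓ, and hence has cardinality (n+1)n/2. -/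
attribute [local instance] Classical.propDecidable

/-! A node `A ∉ ℓ` uses `ℓ`: its fundamental polynomial has degree `≤ n` and vanishes at the
`n + 1` nodes on `ℓ`, so its restriction to `ℓ`, a univariate polynomial of degree `≤ n`, is zero,
and a polynomial vanishing on a line is divisible by the line's equation. A node `A ∈ ℓ` cannot
use `ℓ`, because its fundamental polynomial takes the value `1` at `A`. The count follows from
`#X = (n + 2)(n + 1)/2` and `#(X ∩ ℓ) = n + 1`. -/

open MvPolynomial

theorem MvPolynomial.eq_C_add_sum_C_mul_X_of_totalDegree_le_one_s7 {R σ : Type*} [CommSemiring R]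
    [Fintype σ] [DecidableEq σ] {p : MvPolynomial σ R} (hp : p.totalDegree ≤ 1) :
    p = C (p.coeff 0) + ∑ i, C (p.coeff (Finsupp.single i 1)) * X i := by
  ext d
  simp only [coeff_add, coeff_C, coeff_sum, coeff_C_mul, coeff_X, mul_ite, mul_one, mul_zero]
  rcases Nat.lt_or_ge 1 d.degree with hd | hd
  · have hd0 : d ≠ 0 := by rintro rfl; simp at hd
    have hd1 : ∀ i, Finsupp.single i 1 ≠ d := by rintro i rfl; simp at hd
    simp [coeff_eq_zero_of_totalDegree_lt (hp.trans_lt hd), hd0.symm, hd1]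
  rcases Nat.le_one_iff_eq_zero_or_eq_one.1 hd with hd | hd
  · obtain rfl := (Finsupp.degree_eq_zero_iff d).1 hd
    simp
  · obtain ⟨j, rfl⟩ := (Finsupp.sum_eq_one_iff d).1 hd
    simp [Finsupp.single_left_inj, (Finsupp.single_ne_zero.2 one_ne_zero).symm]

theorem MvPolynomial.dvd_sub_aeval {R σ : Type*} [CommRing R] {d : MvPolynomial σ R}
    {g : σ → MvPolynomial σ R} (hg : ∀ i, d ∣ X i - g i) (p : MvPolynomial σ R) :
    d ∣ p - aeval g p := by
  set π := Ideal.Quotient.mkₐ R (Ideal.span {d})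
  have hπ : π.comp (aeval g) = π := by
    ext i
    simpa [π, Ideal.Quotient.eq, Ideal.mem_span_singleton] using (hg i).neg_right
  rw [← Ideal.mem_span_singleton, ← Ideal.Quotient.eq, ← Ideal.Quotient.mkₐ_eq_mk R]
  exact (AlgHom.congr_fun hπ p).symm

theorem MvPolynomial.natDegree_aeval_le_totalDegree {R σ : Type*} [CommSemiring R]
    {s : σ → Polynomial R} (hs : ∀ i, (s i).natDegree ≤ 1) (p : MvPolynomial σ R) :
    (aeval s p).natDegree ≤ p.totalDegree := by
  rw [aeval_def, eval₂_eq]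
  refine Polynomial.natDegree_sum_le_of_forall_le _ _ fun d hd => ?_
  refine (Polynomial.natDegree_C_mul_le _ _).trans <| (Polynomial.natDegree_prod_le _ _).trans ?_
  calc ∑ i ∈ d.support, (s i ^ d i).natDegree
      ≤ ∑ i ∈ d.support, d i := Finset.sum_le_sum fun i _ =>
        Polynomial.natDegree_pow_le.trans (by simpa using Nat.mul_le_mul_left (d i) (hs i))
    _ ≤ p.totalDegree := le_totalDegree hd

theorem IsLinearPoly.exists_eq {l : MvPolynomial (Fin 2) ℝ} (hl : IsLinearPoly l) :
    ∃ a b c : ℝ, (a ≠ 0 ∨ b ≠ 0) ∧ l = C c + C a * X 0 + C b * X 1 := by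
  have hrepr := eq_C_add_sum_C_mul_X_of_totalDegree_le_one_s7 hl.le
  rw [Fin.sum_univ_two, ← add_assoc] at hrepr
  refine ⟨_, _, _, ?_, hrepr⟩
  by_contra! h
  rw [h.1, h.2, C_0, zero_mul, zero_mul, add_zero, add_zero] at hrepr
  have := hl
  rw [IsLinearPoly, hrepr, totalDegree_C] at this
  exact zero_ne_one this

theorem evalPt_linear (a b c : ℝ) (A : ℝ × ℝ) :
    evalPt (C c + C a * X 0 + C b * X 1) A = c + a * A.1 + b * A.2 := by
  simp [evalPt]

noncomputable def lineRestrict (p : MvPolynomial (Fin 2) ℝ) (P v : ℝ × ℝ) : Polynomial ℝ :=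
  aeval ![Polynomial.C v.1 * Polynomial.X + Polynomial.C P.1,
    Polynomial.C v.2 * Polynomial.X + Polynomial.C P.2] p

theorem eval_lineRestrict (p : MvPolynomial (Fin 2) ℝ) (P v : ℝ × ℝ) (t : ℝ) :
    (lineRestrict p P v).eval t = evalPt p (P + t • v) := by
  rw [lineRestrict, aeval_def, polynomial_eval_eval₂, evalPt, MvPolynomial.eval, coe_eval₂Hom]
  congr 1
  · ext; simp
  · funext i
    fin_cases i <;>
      simp only [Fin.zero_eta, Fin.mk_one, Matrix.cons_val_zero, Matrix.cons_val_one,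
        Matrix.cons_val_fin_one, Polynomial.eval_add, Polynomial.eval_mul, Polynomial.eval_C,
        Polynomial.eval_X, Prod.fst_add, Prod.snd_add, Prod.smul_fst, Prod.smul_snd,
        smul_eq_mul] <;>
      ring

theorem natDegree_lineRestrict_le (p : MvPolynomial (Fin 2) ℝ) (P v : ℝ × ℝ) :
    (lineRestrict p P v).natDegree ≤ p.totalDegree :=
  natDegree_aeval_le_totalDegree (fun i => by
    fin_cases i <;> exact Polynomial.natDegree_linear_le) p

theorem lineRestrict_eq_zero {n : ℕ} {p : MvPolynomial (Fin 2) ℝ} (hp : p.totalDegree ≤ n)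
    {P v : ℝ × ℝ} {T : Finset (ℝ × ℝ)} (hT : n < T.card) {τ : ℝ × ℝ → ℝ}
    (hτ : ∀ A ∈ T, P + τ A • v = A) (hpT : ∀ A ∈ T, evalPt p A = 0) :
    lineRestrict p P v = 0 := by
  have hinj : Set.InjOn τ T := fun A hA B hB h => by rw [← hτ A hA, ← hτ B hB, h]
  refine Polynomial.eq_zero_of_natDegree_lt_card_of_eval_eq_zero' _ (T.image τ) ?_ ?_
  · simp only [Finset.mem_image, forall_exists_index, and_imp]
    rintro _ A hA rfl
    rw [eval_lineRestrict, hτ A hA, hpT A hA]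
  · rw [Finset.card_image_of_injOn hinj]
    exact (natDegree_lineRestrict_le p P v).trans_lt (hp.trans_lt hT)

theorem dvd_of_lineRestrict_eq_zero {a b c : ℝ} (hab : a ≠ 0 ∨ b ≠ 0) {P : ℝ × ℝ}
    (hP : c + a * P.1 + b * P.2 = 0) {p : MvPolynomial (Fin 2) ℝ}
    (hp : lineRestrict p P (-b, a) = 0) :
    C c + C a * X 0 + C b * X 1 ∣ p := by
  have hs : a * a + b * b ≠ 0 := by
    rwa [Ne, mul_self_add_mul_self_eq_zero, not_and_or]
  have hu : C (a * a + b * b)⁻¹ * (C a * C a + C b * C b) = (1 : MvPolynomial (Fin 2) ℝ) := by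
    rw [← C_mul, ← C_mul, ← C_add, ← C_mul, inv_mul_cancel₀ hs, C_1]
  have hP' : C c + C a * C P.1 + C b * C P.2 = (0 : MvPolynomial (Fin 2) ℝ) := by
    rw [← C_mul, ← C_mul, ← C_add, ← C_add, hP, C_0]
  set u : MvPolynomial (Fin 2) ℝ := C (a * a + b * b)⁻¹
  -- `L` is the coordinate along the line, so substituting `P + L • (-b, a)` for the variables
  -- moves each variable by a multiple of the line's equation.
  set L : MvPolynomial (Fin 2) ℝ := u * (C a * (X 1 - C P.2) - C b * (X 0 - C P.1))
  have hg : ∀ i, C c + C a * X 0 + C b * X 1 ∣ X i - Polynomial.aeval L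
      (![Polynomial.C (-b) * Polynomial.X + Polynomial.C P.1,
        Polynomial.C a * Polynomial.X + Polynomial.C P.2] i) := by
    intro i
    fin_cases i
    · refine ⟨C a * u, ?_⟩
      simp only [Fin.zero_eta, Matrix.cons_val_zero, map_add, map_mul, map_neg,
        Polynomial.aeval_C, algebraMap_eq, Polynomial.aeval_X, L]
      linear_combination -(X 0 - C P.1) * hu - C a * u * hP'
    · refine ⟨C b * u, ?_⟩
      simp only [Fin.mk_one, Matrix.cons_val_one, Matrix.cons_val_fin_one, map_add, map_mul,
        Polynomial.aeval_C, algebraMap_eq, Polynomial.aeval_X, L]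
      linear_combination -(X 1 - C P.2) * hu - C b * u * hP'
  have hzero : aeval (fun i => Polynomial.aeval L
      (![Polynomial.C (-b) * Polynomial.X + Polynomial.C P.1,
        Polynomial.C a * Polynomial.X + Polynomial.C P.2] i)) p = 0 := by
    rw [← comp_aeval_apply]
    exact (congrArg _ hp).trans (map_zero _)
  simpa only [hzero, sub_zero] using dvd_sub_aeval hg p

theorem IsLinearPoly.dvd_of_eval_eq_zero {l p : MvPolynomial (Fin 2) ℝ} (hl : IsLinearPoly l)
    {n : ℕ} (hp : p.totalDegree ≤ n) {T : Finset (ℝ × ℝ)} (hT : n < T.card)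
    (hTl : ∀ A ∈ T, OnLine l A) (hpT : ∀ A ∈ T, evalPt p A = 0) : l ∣ p := by
  obtain ⟨a, b, c, hab, rfl⟩ := hl.exists_eq
  simp only [OnLine, evalPt_linear] at hTl
  obtain ⟨P, hPT⟩ := Finset.card_pos.1 (n.zero_le.trans_lt hT)
  have hs : a * a + b * b ≠ 0 := by
    rwa [Ne, mul_self_add_mul_self_eq_zero, not_and_or]
  refine dvd_of_lineRestrict_eq_zero hab (hTl P hPT) (lineRestrict_eq_zero hp hT
    (τ := fun A => (a * (A.2 - P.2) - b * (A.1 - P.1)) / (a * a + b * b)) (fun A hAT => ?_) hpT)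
  have hA := hTl A hAT
  have hP := hTl P hPT
  have ht := div_mul_cancel₀ (a * (A.2 - P.2) - b * (A.1 - P.1)) hs
  ext <;> apply mul_right_cancel₀ hs <;>
    simp only [Prod.fst_add, Prod.snd_add, Prod.smul_fst, Prod.smul_snd, smul_eq_mul]
  · linear_combination (-b) * ht - a * (hA - hP)
  · linear_combination a * ht - b * (hA - hP)

theorem Uses.not_onLine {n : ℕ} {X : Finset (ℝ × ℝ)} {A : ℝ × ℝ} {l : MvPolynomial (Fin 2) ℝ}
    (h : Uses n X A l) : ¬OnLine l A := by
  obtain ⟨_, ⟨-, hA, -⟩, q, rfl⟩ := h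
  intro hl
  rw [evalPt, map_mul, ← evalPt, hl, zero_mul] at hA
  exact zero_ne_one hA

theorem IsMaximalLine.uses_of_not_onLine {n : ℕ} {X : Finset (ℝ × ℝ)}
    {l : MvPolynomial (Fin 2) ℝ} (hl : IsMaximalLine n X l) (hX : NCorrect n X) {A : ℝ × ℝ}
    (hA : A ∈ X) (hAl : ¬OnLine l A) : Uses n X A l := by
  obtain ⟨p, hp⟩ := hX.exists_isFundamental hA
  refine ⟨p, hp, hl.1.dvd_of_eval_eq_zero hp.1 (T := X.filter (OnLine l ·))
    (by rw [hl.2]; exact n.lt_succ_self) (fun B hB => (Finset.mem_filter.1 hB).2) fun B hB => ?_⟩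
  obtain ⟨hBX, hBl⟩ := Finset.mem_filter.1 hB
  exact hp.2.2 B hBX (by rintro rfl; exact hAl hBl)

/-- If `l` is a maximal line of an `n`-correct set `X`, then
`Xˡ = X \ l`, hence `#Xˡ = (n+1)n/2`. -/
theorem usedset_of_maximal_line
    (n : ℕ) (X : Finset (ℝ × ℝ)) (hX : NCorrect n X)
    (l : MvPolynomial (Fin 2) ℝ) (hl : IsMaximalLine n X l) :
    UsedSet n X l = X.filter (fun A => ¬ OnLine l A) ∧
    (UsedSet n X l).card = (n + 1) * n / 2 := by
  have hset : UsedSet n X l = X.filter (fun A => ¬ OnLine l A) :=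
    Finset.filter_congr fun A hA => ⟨Uses.not_onLine, hl.uses_of_not_onLine hX hA⟩
  have hsplit := Finset.card_filter_add_card_filter_not (s := X) (OnLine l ·)
  have htriangle : (n + 2) * (n + 1) / 2 = (n + 1) * n / 2 + (n + 1) := by
    rw [show (n + 2) * (n + 1) = (n + 1) * n + 2 * (n + 1) by ring,
      Nat.add_mul_div_left _ _ two_pos]
  rw [hl.2, hX.1, htriangle] at hsplit
  exact ⟨hset, by rw [hset]; omega⟩
end
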